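/- Let R be a principal ideal domain, let C be a finite projective chain complex over RΓ which is an R-homology n-sphere and an algebraic homotopy representation over R, and let H ∈ F be such that C is tight at every K ∈ F with (H) < (K) and n := n(H) ≥ 0. Define the splitting quotient S_H C as the cokernel of the map ⊕ C(K) → C(H), summed over all G-maps f : G/H → G/K with K ∈ F and (H) < (K), i.e. S_H C is C(H) modulo the sum of the images of all such induced maps C(f). Then H_{n+1}(S_H C) = 0. -/

import Mathlib

open CategoryTheory CategoryTheory.Limits Opposite

noncomputable section

namespace OrbitPaper

variable (G : Type) [Group G] (F : Set (Subgroup G)) (R : Type) [CommRing R]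

/-- The conjugate subgroup `gHg⁻¹` of `H`. -/
def conjSub (g : G) (H : Subgroup G) : Subgroup G := H.map (MulAut.conj g).toMonoidHom

/-- `(H) ≤ (K)` : some conjugate of `H` is contained in `K`. -/
def Subconj (H K : Subgroup G) : Prop := ∃ g : G, conjSub G g H ≤ K

/-- `(H) < (K)` : `(H) ≤ (K)` but not `(K) ≤ (H)`. -/
def SubconjLT (H K : Subgroup G) : Prop := Subconj G H K ∧ ¬ Subconj G K H

/-- `F` is a family of subgroups closed under conjugation and under taking subgroups. -/
def IsClosedFamily : Prop :=
  (∀ (g : G) (H : Subgroup G), H ∈ F → conjSub G g H ∈ F) ∧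
    (∀ H K : Subgroup G, H ≤ K → K ∈ F → H ∈ F)

/-- A super class function defined on `F`: it is constant on conjugacy classes and
takes the value `-1` outside of `F`. -/
def IsSuperClass (n : Subgroup G → ℤ) : Prop :=
  (∀ (g : G) (H : Subgroup G), n (conjSub G g H) = n H) ∧ (∀ H : Subgroup G, H ∉ F → n H = -1)

/-- Objects of the orbit category `Or_F G` : orbits `G/K` with `K ∈ F`. -/
structure OrbitObj : Type where
  grp : Subgroup G
  mem : grp ∈ F

variable {G F}

/-- The orbit category: morphisms `G/K → G/L` are the `G`-equivariant maps. -/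
instance : Category (OrbitObj G F) where
  Hom A B := { f : G ⧸ A.grp → G ⧸ B.grp // ∀ (g : G) (x : G ⧸ A.grp), f (g • x) = g • f x }
  id A := ⟨fun x => x, fun _ _ => rfl⟩
  comp f g := ⟨fun x => g.1 (f.1 x), fun a x => by
    show g.1 (f.1 (a • x)) = a • g.1 (f.1 x)
    rw [f.2, g.2]⟩

/-- The canonical projection `G/H → G/K` for `H ≤ K`, as a morphism of the orbit category. -/
def projMor (A B : OrbitObj G F) (h : A.grp ≤ B.grp) : A ⟶ B :=
  ⟨Quotient.map' id (fun a b hab => by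
      rw [QuotientGroup.leftRel_apply] at hab ⊢
      exact h hab),
   fun g x => by
      induction x using Quotient.inductionOn' with
      | h a => rfl⟩

lemma projMor_comp (A B C' : OrbitObj G F) (h1 : A.grp ≤ B.grp) (h2 : B.grp ≤ C'.grp) :
    projMor A C' (h1.trans h2) = projMor A B h1 ≫ projMor B C' h2 := by
  apply Subtype.ext
  funext x
  induction x using Quotient.inductionOn' with
  | h a => rfl

variable (G F) in
/-- The category of `RΓ`-modules: contravariant functors from the orbit category to `R`-modules. -/
abbrev OrbMod := (OrbitObj G F)ᵒᵖ ⥤ ModuleCat.{0} R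

variable {R}

/-- The free `RΓ`-module on the family of orbits `G/b i`; evaluated at `G/A` it is the free
`R`-module on `⨿ᵢ (G/b i)^A = ⨿ᵢ Hom(G/A, G/b i)`. -/
def freeOn {ι : Type} (b : ι → OrbitObj G F) : OrbMod G F R where
  obj A := ModuleCat.of R ((Σ i : ι, (A.unop ⟶ b i)) →₀ R)
  map {A B} f := ModuleCat.ofHom (Finsupp.lmapDomain R R (fun x => ⟨x.1, f.unop ≫ x.2⟩))
  map_id A := by
    have h : (fun x : (Σ i : ι, (A.unop ⟶ b i)) =>
        ((⟨x.1, (𝟙 A : A ⟶ A).unop ≫ x.2⟩ : Σ i : ι, (A.unop ⟶ b i)))) = _root_.id := by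
      funext x
      cases x with
      | mk i g => simp
    apply ModuleCat.hom_ext
    show Finsupp.lmapDomain R R _ = _
    rw [h, Finsupp.lmapDomain_id]
    rfl
  map_comp {A B C} f g := by
    have h : (fun x : (Σ i : ι, (A.unop ⟶ b i)) =>
          ((⟨x.1, (f ≫ g).unop ≫ x.2⟩ : Σ i : ι, (C.unop ⟶ b i)))) =
        (fun x : (Σ i : ι, (B.unop ⟶ b i)) =>
          ((⟨x.1, g.unop ≫ x.2⟩ : Σ i : ι, (C.unop ⟶ b i)))) ∘
        (fun x : (Σ i : ι, (A.unop ⟶ b i)) =>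
          ((⟨x.1, f.unop ≫ x.2⟩ : Σ i : ι, (B.unop ⟶ b i)))) := by
      funext x
      cases x with
      | mk i h => simp
    apply ModuleCat.hom_ext
    show Finsupp.lmapDomain R R _ = _
    rw [h, Finsupp.lmapDomain_comp]
    rfl

/-- The morphism of free modules induced by a reindexing map `u : ι' → ι`. -/
def freeOnMap {ι' ι : Type} (u : ι' → ι) (b : ι → OrbitObj G F) :
    (freeOn (R := R) (fun j => b (u j))) ⟶ freeOn (R := R) b where
  app A := ModuleCat.ofHom (Finsupp.lmapDomain R R (fun x => ⟨u x.1, x.2⟩))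
  naturality {A B} f := by
    apply ModuleCat.hom_ext
    show (Finsupp.lmapDomain R R _).comp (Finsupp.lmapDomain R R _) =
      (Finsupp.lmapDomain R R _).comp (Finsupp.lmapDomain R R _)
    rw [← Finsupp.lmapDomain_comp, ← Finsupp.lmapDomain_comp]
    rfl

variable (R) in
/-- An `RΓ`-module is free if it is isomorphic to a direct sum of modules `R[(G/K)^?]`. -/
def IsFreeMod (M : OrbMod G F R) : Prop :=
  ∃ (ι : Type) (b : ι → OrbitObj G F), Nonempty (M ≅ freeOn b)

variable (R) in
/-- A finitely generated free `RΓ`-module. -/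
def IsFinFreeMod (M : OrbMod G F R) : Prop :=
  ∃ (k : ℕ) (b : Fin k → OrbitObj G F), Nonempty (M ≅ freeOn b)

variable (R) in
/-- An `RΓ`-module is projective if it is a direct summand of a free module. -/
def IsProjMod (M : OrbMod G F R) : Prop :=
  ∃ (P : OrbMod G F R) (i : M ⟶ P) (r : P ⟶ M), IsFreeMod R P ∧ i ≫ r = 𝟙 M

variable (R) in
/-- A finitely generated projective `RΓ`-module: a direct summand of a f.g. free module. -/
def IsFinProjMod (M : OrbMod G F R) : Prop :=
  ∃ (P : OrbMod G F R) (i : M ⟶ P) (r : P ⟶ M), IsFinFreeMod R P ∧ i ≫ r = 𝟙 M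

variable (R) in
/-- A finitely generated `RΓ`-module: a quotient of a f.g. free module. -/
def IsFGMod (M : OrbMod G F R) : Prop :=
  ∃ (k : ℕ) (b : Fin k → OrbitObj G F) (π : freeOn b ⟶ M),
    ∀ A : (OrbitObj G F)ᵒᵖ, Function.Surjective (π.app A)

variable (G F R) in
/-- (Nonnegatively graded) chain complexes of `RΓ`-modules. -/
abbrev OrbCx := ChainComplex (OrbMod G F R) ℕ

variable (R) in
/-- The complex is zero above some dimension. -/
def IsBoundedCx (C : OrbCx G F R) : Prop := ∃ n : ℕ, ∀ i : ℕ, n < i → IsZero (C.X i)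

variable (R) in
/-- A finite free chain complex of `RΓ`-modules. -/
def IsFiniteFreeCx (C : OrbCx G F R) : Prop := IsBoundedCx R C ∧ ∀ i, IsFinFreeMod R (C.X i)

variable (R) in
/-- A finite projective chain complex of `RΓ`-modules. -/
def IsFiniteProjCx (C : OrbCx G F R) : Prop := IsBoundedCx R C ∧ ∀ i, IsFinProjMod R (C.X i)

/-- Evaluation of a chain complex of `RΓ`-modules at an orbit `G/A`; this is the complex
`C(A)` of `R`-modules. -/
def evalCx (C : OrbCx G F R) (A : OrbitObj G F) : ChainComplex (ModuleCat.{0} R) ℕ where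
  X i := (C.X i).obj (op A)
  d i j := (C.d i j).app (op A)
  shape i j h := by
    show (C.d i j).app (op A) = 0
    rw [C.shape i j h]; simp
  d_comp_d' i j k _ _ := by
    show (C.d i j).app (op A) ≫ (C.d j k).app (op A) = 0
    rw [← NatTrans.comp_app, C.d_comp_d]; simp

/-- The chain map `C(f) : C(K) → C(H)` induced by a `G`-map `f : G/H → G/K`. -/
def evalMap (C : OrbCx G F R) {A B : OrbitObj G F} (f : A ⟶ B) :
    evalCx C B ⟶ evalCx C A where
  f i := (C.X i).map f.op
  comm' i j _ := (C.d i j).naturality f.op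

/-- `Dim C` at an object of the orbit category: the largest `d` with `C_d(A) ≠ 0`
(and `-1` if `C(A) = 0`). -/
def dimObj (C : OrbCx G F R) (A : OrbitObj G F) : ℤ :=
  sSup (insert (-1) {d : ℤ | ∃ i : ℕ, (i : ℤ) = d ∧ ¬ IsZero ((C.X i).obj (op A))})

open Classical in
/-- The dimension function `Dim C` as a super class function on all subgroups of `G`. -/
def dimFun (C : OrbCx G F R) (H : Subgroup G) : ℤ :=
  if h : H ∈ F then dimObj C ⟨H, h⟩ else -1

/-- The homological dimension of `C(A)` : the largest `d` with `H_d(C(A)) ≠ 0`. -/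
def hdimObj (C : OrbCx G F R) (A : OrbitObj G F) : ℤ :=
  sSup (insert (-1) {d : ℤ | ∃ i : ℕ, (i : ℤ) = d ∧ ¬ IsZero ((evalCx C A).homology i)})

/-- `C` is tight at `A` if `Dim C(A) = hdim C(A)`. -/
def TightAt (C : OrbCx G F R) (A : OrbitObj G F) : Prop := dimObj C A = hdimObj C A

variable (G F R) in
/-- The constant functor `R̲`. -/
def constR : OrbMod G F R := (Functor.const (OrbitObj G F)ᵒᵖ).obj (ModuleCat.of R R)

variable (R) in
/-- The augmented complex `⋯ → D_1 → D_0 → R → 0` of a complex of `R`-modules equipped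
with an augmentation `e`, with `R` placed in degree `0` (so degree `i+1` is old degree `i`). -/
def augmentR (D : ChainComplex (ModuleCat.{0} R) ℕ) (e : D.X 0 ⟶ ModuleCat.of R R)
    (he : D.d 1 0 ≫ e = 0) : ChainComplex (ModuleCat.{0} R) ℕ :=
  ChainComplex.of (fun n => match n with | 0 => ModuleCat.of R R | (k+1) => D.X k)
    (fun n => match n with | 0 => e | (k+1) => D.d (k+1) k)
    (fun n => match n with | 0 => he | (k+1) => D.d_comp_d _ _ _)

variable (R) in
/-- A complex of `R`-modules (already augmented) has the homology of an `nv`-sphere: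
homology `R` in degree `nv + 1` and zero elsewhere.  (Degree `d` of reduced homology
corresponds to degree `d+1` of the augmented complex.) -/
def SphereLike (D : ChainComplex (ModuleCat.{0} R) ℕ) (nv : ℤ) : Prop :=
  ∃ m : ℕ, (m : ℤ) = nv + 1 ∧ (∀ i : ℕ, i ≠ m → IsZero (D.homology i)) ∧
    Nonempty (D.homology m ≅ ModuleCat.of R R)

lemma eval_d_aug (C : OrbCx G F R) (ε : C.X 0 ⟶ constR G F R) (hε : C.d 1 0 ≫ ε = 0)
    (A : OrbitObj G F) :
    (evalCx C A).d 1 0 ≫ (ε.app (op A) : (C.X 0).obj (op A) ⟶ ModuleCat.of R R) = 0 := by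
  show (C.d 1 0).app (op A) ≫ ε.app (op A) = 0
  rw [← NatTrans.comp_app, hε]
  simp

/-- `C` is an (augmented) `R`-homology `n`-sphere: for every `K ∈ F` the reduced homology of
`C(K)` is that of an `n(K)`-sphere. -/
def IsHomologySphere (C : OrbCx G F R) (ε : C.X 0 ⟶ constR G F R) (hε : C.d 1 0 ≫ ε = 0)
    (n : Subgroup G → ℤ) : Prop :=
  ∀ A : OrbitObj G F,
    SphereLike R (augmentR R (evalCx C A) (ε.app (op A)) (eval_d_aug C ε hε A)) (n A.grp)

variable (G) in
/-- Condition (i): the dimension function is monotone. -/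
def CondI (n : Subgroup G → ℤ) : Prop :=
  ∀ H K : Subgroup G, Subconj G H K → n K ≤ n H

/-- Condition (ii): if `n(H) = n(K)` then every `G`-map `f : G/H → G/K` induces an
`R`-homology isomorphism `C(K) → C(H)`. -/
def CondII (C : OrbCx G F R) (n : Subgroup G → ℤ) : Prop :=
  ∀ (A B : OrbitObj G F) (f : A ⟶ B), n A.grp = n B.grp →
    ∀ i : ℕ, IsIso (HomologicalComplex.homologyMap (evalMap C f) i)

variable (G F) in
/-- Condition (iii): joins of subgroups realizing the same dimension stay in the
family with the same dimension. -/
def CondIII (n : Subgroup G → ℤ) : Prop :=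
  ∀ H K L : Subgroup G, H ∈ F → K ∈ F → L ∈ F → H ≤ K → H ≤ L →
    n H = n K → n H = n L → -1 < n H → (K ⊔ L ∈ F ∧ n (K ⊔ L) = n H)



/-- The subcomplex of a complex of `R`-modules determined by a compatible family of
submodules. -/
def subCx (D : ChainComplex (ModuleCat.{0} R) ℕ) (N : ∀ i, Submodule R (D.X i))
    (hN : ∀ i j, ∀ x ∈ N i, D.d i j x ∈ N j) : ChainComplex (ModuleCat.{0} R) ℕ where
  X i := ModuleCat.of R (N i)
  d i j := ModuleCat.ofHom ((D.d i j).hom.restrict (hN i j))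
  shape i j h := by
    ext x
    show D.d i j x.1 = 0
    rw [D.shape i j h]
    rfl
  d_comp_d' i j k _ _ := by
    ext x
    show D.d j k (D.d i j x.1) = 0
    exact DFunLike.congr_fun (congrArg ModuleCat.Hom.hom (D.d_comp_d i j k)) x.1

/-- The inclusion of subcomplexes induced by inclusions of submodules. -/
def subCxIncl (D : ChainComplex (ModuleCat.{0} R) ℕ) (N N' : ∀ i, Submodule R (D.X i))
    (hN : ∀ i j, ∀ x ∈ N i, D.d i j x ∈ N j) (hN' : ∀ i j, ∀ x ∈ N' i, D.d i j x ∈ N' j)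
    (h : ∀ i, N' i ≤ N i) : subCx D N' hN' ⟶ subCx D N hN where
  f i := ModuleCat.ofHom (Submodule.inclusion (h i))
  comm' i j _ := by
    ext x
    apply Subtype.ext
    rfl

/-- The quotient complex of a complex of `R`-modules by a compatible family of submodules. -/
def subQuotCx (D : ChainComplex (ModuleCat.{0} R) ℕ) (N : ∀ i, Submodule R (D.X i))
    (hN : ∀ i j, ∀ x ∈ N i, D.d i j x ∈ N j) : ChainComplex (ModuleCat.{0} R) ℕ where
  X i := ModuleCat.of R ((D.X i) ⧸ N i)
  d i j := ModuleCat.ofHom (Submodule.mapQ (N i) (N j) (D.d i j).hom (fun x hx => hN i j x hx))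
  shape i j h := by
    apply ModuleCat.hom_ext
    refine Submodule.linearMap_qext _ ?_
    ext x
    simp only [LinearMap.comp_apply, Submodule.mkQ_apply, Submodule.mapQ_apply,
      D.shape i j h]
    rfl
  d_comp_d' i j k _ _ := by
    apply ModuleCat.hom_ext
    refine Submodule.linearMap_qext _ ?_
    ext x
    have hx : D.d j k (D.d i j x) = 0 :=
      DFunLike.congr_fun (congrArg ModuleCat.Hom.hom (D.d_comp_d i j k)) x
    show (Submodule.mapQ (N j) (N k) (D.d j k).hom (fun y hy => hN j k y hy))
        ((Submodule.mapQ (N i) (N j) (D.d i j).hom (fun y hy => hN i j y hy))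
          (Submodule.Quotient.mk x)) = 0
    rw [Submodule.mapQ_apply, Submodule.mapQ_apply, hx]
    rfl

/-- The restriction of an augmentation to a subcomplex. -/
def subAug (D : ChainComplex (ModuleCat.{0} R) ℕ) (N : ∀ i, Submodule R (D.X i))
    (hN : ∀ i j, ∀ x ∈ N i, D.d i j x ∈ N j) (e : D.X 0 ⟶ ModuleCat.of R R) :
    (subCx D N hN).X 0 ⟶ ModuleCat.of R R :=
  ModuleCat.ofHom (e.hom.comp (N 0).subtype)

lemma subAug_d (D : ChainComplex (ModuleCat.{0} R) ℕ) (N : ∀ i, Submodule R (D.X i))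
    (hN : ∀ i j, ∀ x ∈ N i, D.d i j x ∈ N j) (e : D.X 0 ⟶ ModuleCat.of R R)
    (he : D.d 1 0 ≫ e = 0) :
    (subCx D N hN).d 1 0 ≫ subAug D N hN e = 0 := by
  ext x
  show e (D.d 1 0 x.1) = 0
  have := DFunLike.congr_fun (congrArg ModuleCat.Hom.hom he) x.1
  simpa using this

lemma mapRange_le (C : OrbCx G F R) {A B : OrbitObj G F} (f : A ⟶ B) (i j : ℕ) :
    Submodule.map ((evalCx C A).d i j).hom (LinearMap.range ((C.X i).map f.op).hom) ≤
      LinearMap.range ((C.X j).map f.op).hom := by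
  rintro x ⟨y, ⟨z, rfl⟩, rfl⟩
  refine ⟨(C.d i j).app (op B) z, ?_⟩
  exact (DFunLike.congr_fun (congrArg ModuleCat.Hom.hom ((C.d i j).naturality f.op)) z).symm

/-- The sum of the images of the maps `C(f_k) : C(B_k) → C(A)` in degree `i`. -/
def rangeN (C : OrbCx G F R) (A : OrbitObj G F) {κ : Type} (Bs : κ → OrbitObj G F)
    (fs : ∀ k, A ⟶ Bs k) (i : ℕ) : Submodule R ((evalCx C A).X i) :=
  ⨆ k, LinearMap.range ((C.X i).map (fs k).op).hom

lemma rangeN_compat (C : OrbCx G F R) (A : OrbitObj G F) {κ : Type} (Bs : κ → OrbitObj G F)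
    (fs : ∀ k, A ⟶ Bs k) :
    ∀ i j, ∀ x ∈ rangeN C A Bs fs i, (evalCx C A).d i j x ∈ rangeN C A Bs fs j := by
  intro i j x hx
  have hmap : Submodule.map ((evalCx C A).d i j).hom (rangeN C A Bs fs i) ≤ rangeN C A Bs fs j := by
    rw [rangeN, Submodule.map_iSup]
    exact iSup_le fun k => (mapRange_le C (fs k) i j).trans
      (le_iSup (fun k' => LinearMap.range ((C.X j).map (fs k').op).hom) k)
  exact hmap ⟨x, hx, rfl⟩

lemma range_le_of_factor (C : OrbCx G F R) {A B B' : OrbitObj G F} (f : A ⟶ B) (g : B ⟶ B')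
    (i : ℕ) :
    LinearMap.range ((C.X i).map (f ≫ g).op).hom ≤ LinearMap.range ((C.X i).map f.op).hom := by
  rintro x ⟨z, rfl⟩
  refine ⟨(C.X i).map g.op z, ?_⟩
  have h : (C.X i).map (f ≫ g).op = (C.X i).map g.op ≫ (C.X i).map f.op := by
    rw [op_comp, Functor.map_comp]
  rw [h]
  simp

/-- The product of two `RΓ`-modules. -/
def prodF (M N : OrbMod G F R) : OrbMod G F R where
  obj A := ModuleCat.of R (M.obj A × N.obj A)
  map {A B} f := ModuleCat.ofHom (LinearMap.prodMap (M.map f).hom (N.map f).hom)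
  map_id A := by
    apply ModuleCat.hom_ext
    show LinearMap.prodMap (M.map (𝟙 A)).hom (N.map (𝟙 A)).hom = _
    rw [M.map_id, N.map_id]
    exact LinearMap.prodMap_id ..
  map_comp {A B C} f g := by
    apply ModuleCat.hom_ext
    show LinearMap.prodMap (M.map (f ≫ g)).hom (N.map (f ≫ g)).hom = _
    rw [M.map_comp, N.map_comp]
    exact (LinearMap.prodMap_comp ..).symm



/-- Evaluation of a chain map of complexes of `RΓ`-modules at an orbit. -/
def evalCxMap {C D : OrbCx G F R} (phi : C ⟶ D) (A : OrbitObj G F) :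
    evalCx C A ⟶ evalCx D A where
  f i := (phi.f i).app (op A)
  comm' i j _ := by
    show (phi.f i).app (op A) ≫ (D.d i j).app (op A) =
      (C.d i j).app (op A) ≫ (phi.f j).app (op A)
    rw [← NatTrans.comp_app, ← NatTrans.comp_app, phi.comm i j]

/-- The cokernel complex of a chain map of complexes of `R`-modules. -/
def cokerCx {D E : ChainComplex (ModuleCat.{0} R) ℕ} (phi : E ⟶ D) :
    ChainComplex (ModuleCat.{0} R) ℕ :=
  subQuotCx D (fun i => LinearMap.range (phi.f i).hom) (fun i j x hx => by
    obtain ⟨y, rfl⟩ := hx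
    exact ⟨E.d i j y, (DFunLike.congr_fun (congrArg ModuleCat.Hom.hom (phi.comm i j)) y).symm⟩)

variable (G) in
/-- Indices of summands of type `(K)` with `(H) ≤ (K)`, for `H = A₀.grp`. -/
abbrev SubIdx (A₀ : OrbitObj G F) {κ : Type} (bb : κ → OrbitObj G F) : Type :=
  {j : κ // Subconj G A₀.grp (bb j).grp}

variable (G) in
/-- Indices of summands of type `(K)` with `(H) < (K)`, for `H = A₀.grp`. -/
abbrev SubIdxLT (A₀ : OrbitObj G F) {κ : Type} (bb : κ → OrbitObj G F) : Type :=
  {j : κ // SubconjLT G A₀.grp (bb j).grp}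


/-!
A class in `H_{n+1}(S_H C)` is represented by some `x ∈ C_{n+1}(H)` whose boundary is a sum of
images of maps `C(f) : C_n(K) → C_n(H)`. By tightness, `C(K)` vanishes above `n(K) ≤ n`, so only
the `K` with `n(K) = n` contribute, and each such `f` factors through a projection
`G/H → G/K'` with `K' ⊇ H` conjugate to `K`; by condition (iii) these `K'` are closed under
joins. Write `N(W) ⊆ C(W)` for the sum of the images of finitely many projections
`G/W → G/K'` of this kind. We show, for every `W` with `n(W) = n`, that `∂y ∈ N(W)` implies
`y ∈ Z(C(W)) + N(W)`. As `N(H)` vanishes in degree `n + 1`, this makes `x` a cycle, hence a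
boundary, because `H_{n+1}(C(H)) = 0`.

The claim is proved by induction on the degree. For projective `RΓ`-modules `M`, if
`M(G/W → G/K) β` lies in the sum of the images of the `M(G/W → G/J_t)`, then `β` lies in the sum
of the images of the `M(G/K → G/(K ⊔ J_t))`: on a basis element `G/K → G/L` of a free module
this says that a `G`-map which agrees on `G/W` with a `G`-map defined on `G/J_t` extends to
`G/(K ⊔ J_t)`. Together with the claim in degree `i`, this shows that every cycle in `N_i(W)` is
a sum of images of cycles. By condition (ii) for the projections onto the join `J` of the `K'`
involved, such a sum is the image of one cycle of `C(J)` plus the boundary of an element of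
`N(W)`; if the sum is a boundary in `C(W)`, then that cycle of `C(J)` is a boundary as well.
This gives the claim in degree `i + 1`.
-/

lemma _root_.ChainComplex.next_nat_eq_sub_one (i : ℕ) : (ComplexShape.down ℕ).next i = i - 1 := by
  cases i with
  | zero => exact ChainComplex.next_nat_zero
  | succ i => exact ChainComplex.next_nat_succ i

lemma _root_.CategoryTheory.ShortComplex.moduleCat_exists_of_epi_homologyMap
    {S₁ S₂ : ShortComplex (ModuleCat.{0} R)} (φ : S₁ ⟶ S₂) [Epi (ShortComplex.homologyMap φ)]
    (z : S₂.X₂) (hz : S₂.g z = 0) :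
    ∃ u : S₁.X₂, S₁.g u = 0 ∧ ∃ w : S₂.X₁, z = φ.τ₂ u + S₂.f w := by
  obtain ⟨_, π, hπ, x₂, hx₂, y₁, fac⟩ :=
    (ShortComplex.epi_homologyMap_iff_up_to_refinements φ).1 inferInstance
      (ModuleCat.ofHom (LinearMap.toSpanSingleton R S₂.X₂ z)) (by ext; simp [hz])
  obtain ⟨a, ha⟩ := (ModuleCat.epi_iff_surjective π).1 hπ 1
  refine ⟨x₂ a, by simpa using congr($hx₂ a), y₁ a, ?_⟩
  simpa [ha] using congr($fac a)

lemma _root_.CategoryTheory.ShortComplex.moduleCat_exists_of_mono_homologyMap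
    {S₁ S₂ : ShortComplex (ModuleCat.{0} R)} (φ : S₁ ⟶ S₂) [Mono (ShortComplex.homologyMap φ)]
    (u : S₁.X₂) (hu : S₁.g u = 0) (w : S₂.X₁) (hw : φ.τ₂ u = S₂.f w) :
    ∃ v : S₁.X₁, S₁.f v = u := by
  obtain ⟨_, π, hπ, x₁, fac⟩ :=
    (ShortComplex.mono_homologyMap_iff_up_to_refinements φ).1 inferInstance
      (ModuleCat.ofHom (LinearMap.toSpanSingleton R S₁.X₂ u)) (by ext; simp [hu])
      (ModuleCat.ofHom (LinearMap.toSpanSingleton R S₂.X₁ w)) (by ext; simp [hw])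
  obtain ⟨a, ha⟩ := (ModuleCat.epi_iff_surjective π).1 hπ 1
  exact ⟨x₁ a, by simpa [ha] using congr($fac a).symm⟩

lemma _root_.ChainComplex.moduleCat_isZero_homology_iff (K : ChainComplex (ModuleCat.{0} R) ℕ)
    (i : ℕ) :
    IsZero (K.homology i) ↔ ∀ x : K.X i, K.d i (i - 1) x = 0 → ∃ y, K.d (i + 1) i y = x := by
  rw [← HomologicalComplex.exactAt_iff_isZero_homology,
    HomologicalComplex.exactAt_iff' K (i + 1) i (i - 1) (by simp)
      (ChainComplex.next_nat_eq_sub_one i),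
    ShortComplex.moduleCat_exact_iff]
  rfl

section ChainComplexes

variable {K L : ChainComplex (ModuleCat.{0} R) ℕ}

lemma _root_.ChainComplex.quasiIso_sc'_of_isIso_homologyMap (φ : K ⟶ L) (i : ℕ)
    [IsIso (HomologicalComplex.homologyMap φ i)] :
    ShortComplex.QuasiIso
      ((HomologicalComplex.shortComplexFunctor' _ _ (i + 1) i (i - 1)).map φ) := by
  rw [← quasiIsoAt_iff' φ (i + 1) i (i - 1) (by simp) (ChainComplex.next_nat_eq_sub_one i),
    quasiIsoAt_iff_isIso_homologyMap]
  infer_instance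

lemma _root_.ChainComplex.moduleCat_exists_cycle_of_isIso_homologyMap (φ : K ⟶ L) (i : ℕ)
    [IsIso (HomologicalComplex.homologyMap φ i)] (z : L.X i) (hz : L.d i (i - 1) z = 0) :
    ∃ u : K.X i, K.d i (i - 1) u = 0 ∧ ∃ w, z = φ.f i u + L.d (i + 1) i w :=
  have := ChainComplex.quasiIso_sc'_of_isIso_homologyMap φ i
  ShortComplex.moduleCat_exists_of_epi_homologyMap
    ((HomologicalComplex.shortComplexFunctor' _ _ (i + 1) i (i - 1)).map φ) z hz

lemma _root_.ChainComplex.moduleCat_exists_boundary_of_isIso_homologyMap (φ : K ⟶ L) (i : ℕ)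
    [IsIso (HomologicalComplex.homologyMap φ i)] (u : K.X i) (hu : K.d i (i - 1) u = 0)
    (w : L.X (i + 1)) (hw : φ.f i u = L.d (i + 1) i w) :
    ∃ v, K.d (i + 1) i v = u :=
  have := ChainComplex.quasiIso_sc'_of_isIso_homologyMap φ i
  ShortComplex.moduleCat_exists_of_mono_homologyMap
    ((HomologicalComplex.shortComplexFunctor' _ _ (i + 1) i (i - 1)).map φ) u hu w hw

end ChainComplexes

lemma _root_.Ideal.eq_bot_of_quotient_linearEquiv_self {I : Ideal R} (θ : (R ⧸ I) ≃ₗ[R] R) :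
    I = ⊥ := by
  rw [← Ideal.annihilator_quotient (I := I), θ.annihilator_eq]
  exact Module.annihilator_eq_bot.2 inferInstance

section Augmentation

variable (D : ChainComplex (ModuleCat.{0} R) ℕ) (e : D.X 0 ⟶ ModuleCat.of R R)
  (he : D.d 1 0 ≫ e = 0)

lemma augmentR_d_succ (k : ℕ) : (augmentR R D e he).d (k + 2) (k + 1) = D.d (k + 1) k := by
  exact ChainComplex.of_d (V := ModuleCat.{0} R) (α := ℕ)
    (fun n => match n with | 0 => ModuleCat.of R R | k + 1 => D.X k)
    (fun n => match n with | 0 => e | k + 1 => D.d (k + 1) k) (k + 1)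

lemma augmentR_d_one : (augmentR R D e he).d 1 0 = e := by
  exact ChainComplex.of_d (V := ModuleCat.{0} R) (α := ℕ)
    (fun n => match n with | 0 => ModuleCat.of R R | k + 1 => D.X k)
    (fun n => match n with | 0 => e | k + 1 => D.d (k + 1) k) 0

lemma isZero_homology_succ_of_augmentR (k : ℕ)
    (h : IsZero ((augmentR R D e he).homology (k + 2))) : IsZero (D.homology (k + 1)) := by
  rw [ChainComplex.moduleCat_isZero_homology_iff] at h ⊢
  intro x hx
  obtain ⟨y, hy⟩ := h x (by rwa [show k + 2 - 1 = k + 1 from rfl, augmentR_d_succ])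
  exact ⟨y, by rwa [augmentR_d_succ] at hy⟩

/-- `H_0` of the augmented complex is `R ⧸ im e`, and `R ⧸ I ≅ R` forces `I = 0`. -/
lemma augmentR_eq_zero_of_homology_zero_iso
    (h : Nonempty ((augmentR R D e he).homology 0 ≅ ModuleCat.of R R)) : e = 0 := by
  obtain ⟨θ⟩ := h
  set K := augmentR R D e he
  let ψ : K.homology 0 ≅ ModuleCat.of R (R ⧸ LinearMap.range (K.sc' 1 0 0).f.hom) :=
    K.isoHomologyι₀ ≪≫ K.opcyclesIsoSc' 1 0 0 (by simp) (by simp) ≪≫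
      (K.sc' 1 0 0).moduleCatOpcyclesIso
  have hf := LinearMap.range_eq_bot.1
    (Ideal.eq_bot_of_quotient_linearEquiv_self (ψ.symm ≪≫ θ).toLinearEquiv)
  rw [← augmentR_d_one D e he]
  exact ModuleCat.hom_ext hf

lemma isZero_homology_of_sphereLike {nv : ℤ} (h : SphereLike R (augmentR R D e he) nv) (j : ℕ)
    (hj : nv < j) : IsZero (D.homology j) := by
  obtain ⟨m', hm', hvan, hiso⟩ := h
  cases j with
  | zero =>
    obtain rfl : m' = 0 := by omega
    have hex := (ChainComplex.moduleCat_isZero_homology_iff _ 1).1 (hvan 1 one_ne_zero)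
    refine (ChainComplex.moduleCat_isZero_homology_iff D 0).2 fun x _ => ?_
    obtain ⟨y, hy⟩ := hex x (by
      rw [show (1 - 1 : ℕ) = 0 from rfl, augmentR_d_one]
      simp only [augmentR_eq_zero_of_homology_zero_iso D e he hiso]
      rfl)
    exact ⟨y, by rwa [augmentR_d_succ D e he 0] at hy⟩
  | succ k => exact isZero_homology_succ_of_augmentR D e he k (hvan (k + 2) (by omega))

end Augmentation

section Tightness

variable {C : OrbCx G F R} {W : OrbitObj G F}

lemma le_dimObj (hC : IsBoundedCx R C) {j : ℕ} (hj : ¬ IsZero ((C.X j).obj (op W))) :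
    (j : ℤ) ≤ dimObj C W := by
  obtain ⟨N, hN⟩ := hC
  refine le_csSup (BddAbove.insert _ ⟨N, ?_⟩) (Set.mem_insert_of_mem _ ⟨j, rfl, hj⟩)
  rintro _ ⟨i, rfl, hi⟩
  by_contra hNi
  exact hi (((Functor.isZero_iff _).1 (hN i (by omega))) _)

lemma hdimObj_le_of_sphereLike {e : (evalCx C W).X 0 ⟶ ModuleCat.of R R}
    {he : (evalCx C W).d 1 0 ≫ e = 0} {nv : ℤ} (h : SphereLike R (augmentR R _ e he) nv) :
    hdimObj C W ≤ nv := by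
  refine csSup_le ⟨-1, Set.mem_insert _ _⟩ ?_
  rintro _ (rfl | ⟨i, rfl, hi⟩)
  · obtain ⟨m', hm', -⟩ := h
    omega
  · by_contra hlt
    exact hi (isZero_homology_of_sphereLike _ e he h i (by omega))

lemma isZero_of_tightAt (hC : IsBoundedCx R C) {e : (evalCx C W).X 0 ⟶ ModuleCat.of R R}
    {he : (evalCx C W).d 1 0 ≫ e = 0} {nv : ℤ} (h : SphereLike R (augmentR R _ e he) nv)
    (ht : TightAt C W) {j : ℕ} (hj : nv < j) : IsZero ((C.X j).obj (op W)) := by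
  by_contra hnz
  have := le_dimObj hC hnz
  have := hdimObj_le_of_sphereLike h
  rw [TightAt] at ht
  omega

end Tightness

lemma mem_conjSub {g : G} {H : Subgroup G} {x : G} : x ∈ conjSub G g H ↔ g⁻¹ * x * g ∈ H := by
  rw [conjSub, Subgroup.mem_map_equiv, MulAut.conj_symm_apply]

lemma conjSub_mul (g g' : G) (H : Subgroup G) :
    conjSub G (g * g') H = conjSub G g (conjSub G g' H) := by
  ext x
  simp only [mem_conjSub, mul_inv_rev, mul_assoc]

lemma conjSub_one (H : Subgroup G) : conjSub G 1 H = H := by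
  ext x
  simp [mem_conjSub]

lemma conjSub_mono (g : G) {H K : Subgroup G} (h : H ≤ K) : conjSub G g H ≤ conjSub G g K :=
  fun _ hx => mem_conjSub.2 (h (mem_conjSub.1 hx))

lemma subconj_of_le {H K : Subgroup G} (h : H ≤ K) : Subconj G H K :=
  ⟨1, (conjSub_one H).le.trans h⟩

lemma Subconj.trans {H K L : Subgroup G} (hHK : Subconj G H K) (hKL : Subconj G K L) :
    Subconj G H L := by
  obtain ⟨g, hg⟩ := hHK
  obtain ⟨g', hg'⟩ := hKL
  exact ⟨g' * g, (conjSub_mul g' g H).le.trans ((conjSub_mono g' hg).trans hg')⟩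

section OrbitCategory

variable {W J X : OrbitObj G F}

instance (A B : OrbitObj G F) (h : A.grp ≤ B.grp) : Epi (projMor A B h) := by
  refine ⟨fun f f' hff' => Subtype.ext (funext fun x => ?_)⟩
  induction x using QuotientGroup.induction_on with
  | H g => exact congr_fun (congr_arg Subtype.val hff') (QuotientGroup.mk g)

def cosetMor (J X : OrbitObj G F) (a : G) (ha : J.grp ≤ conjSub G a X.grp) : J ⟶ X :=
  ⟨Quotient.map' (· * a) fun x y hxy => by
      rw [QuotientGroup.leftRel_apply] at hxy ⊢
      simpa [mul_assoc] using mem_conjSub.1 (ha hxy),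
    fun g x => by
      induction x using QuotientGroup.induction_on with
      | H b => exact congr_arg QuotientGroup.mk (mul_assoc g b a)⟩

lemma apply_mk (f : W ⟶ X) (g : G) :
    f.1 (QuotientGroup.mk g) = g • f.1 (QuotientGroup.mk 1) := by
  simpa using f.2 g (QuotientGroup.mk 1 : G ⧸ W.grp)

lemma le_conjSub_of_apply_one (f : W ⟶ X) {a : G}
    (ha : f.1 (QuotientGroup.mk 1) = QuotientGroup.mk a) : W.grp ≤ conjSub G a X.grp := by
  intro x hx
  have hfix : f.1 (QuotientGroup.mk 1) = f.1 (QuotientGroup.mk x) :=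
    congr_arg f.1 (QuotientGroup.eq.2 (by simpa using hx))
  rw [apply_mk f x, ha, MulAction.Quotient.smul_mk, QuotientGroup.eq] at hfix
  simpa [mem_conjSub, mul_assoc] using hfix

lemma eq_projMor_comp_cosetMor (f : W ⟶ X) {a : G}
    (ha : f.1 (QuotientGroup.mk 1) = QuotientGroup.mk a) (hWJ : W.grp ≤ J.grp)
    (hJ : J.grp ≤ conjSub G a X.grp) : f = projMor W J hWJ ≫ cosetMor J X a hJ := by
  refine Subtype.ext (funext fun x => ?_)
  induction x using QuotientGroup.induction_on with
  | H g =>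
    show f.1 (QuotientGroup.mk g) = QuotientGroup.mk (g * a)
    rw [apply_mk f g, ha, MulAction.Quotient.smul_mk]
    rfl

lemma exists_eq_projMor_comp (hF : IsClosedFamily G F) (f : W ⟶ X) :
    ∃ (K : OrbitObj G F) (a : G) (hWK : W.grp ≤ K.grp) (φ : K ⟶ X),
      K.grp = conjSub G a X.grp ∧ f = projMor W K hWK ≫ φ := by
  obtain ⟨a, ha⟩ := QuotientGroup.mk_surjective (f.1 (QuotientGroup.mk 1))
  let K : OrbitObj G F := ⟨conjSub G a X.grp, hF.1 a X.grp X.mem⟩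
  exact ⟨K, a, le_conjSub_of_apply_one f ha.symm, cosetMor K X a le_rfl, rfl,
    eq_projMor_comp_cosetMor f ha.symm _ le_rfl⟩

lemma exists_eq_projMor_comp_of_le_sup {K L : OrbitObj G F} {hWK : W.grp ≤ K.grp}
    {hWJ : W.grp ≤ J.grp} {φ : K ⟶ X} {ψ : J ⟶ X}
    (h : projMor W K hWK ≫ φ = projMor W J hWJ ≫ ψ) (hKL : K.grp ≤ L.grp)
    (hL : L.grp ≤ K.grp ⊔ J.grp) : ∃ χ : L ⟶ X, φ = projMor K L hKL ≫ χ := by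
  obtain ⟨a, ha⟩ := QuotientGroup.mk_surjective (φ.1 (QuotientGroup.mk 1))
  have hψ : ψ.1 (QuotientGroup.mk 1) = QuotientGroup.mk a :=
    (congr_fun (congr_arg Subtype.val h) (QuotientGroup.mk 1)).symm.trans ha.symm
  have hLa : L.grp ≤ conjSub G a X.grp :=
    hL.trans (sup_le (le_conjSub_of_apply_one φ ha.symm) (le_conjSub_of_apply_one ψ hψ))
  exact ⟨cosetMor L X a hLa, eq_projMor_comp_cosetMor φ ha.symm hKL hLa⟩

end OrbitCategory

section PushoutProperty

variable {W K : OrbitObj G F} {ι : Type} {J L : ι → OrbitObj G F}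

lemma map_iSup_range_map_le {M N : OrbMod G F R} (η : M ⟶ N)
    {X : (OrbitObj G F)ᵒᵖ} {Y : ι → (OrbitObj G F)ᵒᵖ} (f : ∀ t, Y t ⟶ X) :
    (⨆ t, LinearMap.range (M.map (f t)).hom).map (η.app X).hom ≤
      ⨆ t, LinearMap.range (N.map (f t)).hom := by
  rw [Submodule.map_iSup]
  refine iSup_mono fun t => ?_
  rintro _ ⟨_, ⟨y, rfl⟩, rfl⟩
  exact ⟨η.app _ y, (NatTrans.naturality_apply η (f t) y).symm⟩

variable {κ : Type} (b : κ → OrbitObj G F)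

/-- `(freeOn b).map p.op` is, by definition, `Finsupp.lmapDomain R R (precompBasis b p)`. -/
def precompBasis {X Y : OrbitObj G F} (p : X ⟶ Y) : (Σ i, Y ⟶ b i) → Σ i, X ⟶ b i :=
  fun x => ⟨x.1, p ≫ x.2⟩

theorem mem_iSup_range_lmapDomain_precompBasis
    (hWK : W.grp ≤ K.grp) (hWJ : ∀ t, W.grp ≤ (J t).grp) (hKL : ∀ t, K.grp ≤ (L t).grp)
    (hL : ∀ t, (L t).grp ≤ K.grp ⊔ (J t).grp) {β : (Σ i, K ⟶ b i) →₀ R}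
    (hβ : Finsupp.mapDomain (precompBasis b (projMor W K hWK)) β ∈
      ⨆ t, LinearMap.range
        (Finsupp.lmapDomain R R (precompBasis b (projMor W (J t) (hWJ t))))) :
    β ∈ ⨆ t, LinearMap.range
      (Finsupp.lmapDomain R R (precompBasis b (projMor K (L t) (hKL t)))) := by
  have hrange {α α' : Type} (f : α → α') :
      LinearMap.range (Finsupp.lmapDomain R R f) ≤ Finsupp.supported R R (Set.range f) := by
    rw [LinearMap.range_eq_map, ← Finsupp.supported_univ, Finsupp.lmapDomain_supported,
      Set.image_univ]
  have hinj : Function.Injective (precompBasis b (projMor W K hWK)) := by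
    rintro ⟨i, φ⟩ ⟨j, ψ⟩ h
    obtain ⟨rfl, h⟩ := Sigma.mk.inj_iff.1 h
    exact Sigma.ext rfl (heq_of_eq ((cancel_epi _).1 (eq_of_heq h)))
  have hsupp := (iSup_le fun t => (hrange _).trans (Finsupp.supported_mono
    (Set.subset_iUnion (fun t => Set.range (precompBasis b (projMor W (J t) (hWJ t)))) t))) hβ
  rw [← Finsupp.sum_single β]
  refine Submodule.finsuppSum_mem _ _ _ _ fun σ hσ => ?_
  obtain ⟨t, τ, hτ⟩ := Set.mem_iUnion.1 (hsupp (Finsupp.mem_support_iff.2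
    ((Finsupp.mapDomain_apply hinj β σ).trans_ne hσ)))
  have hfactor : ∃ σ', precompBasis b (projMor K (L t) (hKL t)) σ' = σ := by
    obtain ⟨i, φ⟩ := σ
    obtain ⟨i', ψ⟩ := τ
    obtain ⟨rfl, hψφ⟩ := Sigma.mk.inj_iff.1 hτ
    obtain ⟨χ, hχ⟩ := exists_eq_projMor_comp_of_le_sup (eq_of_heq hψφ).symm (hKL t) (hL t)
    exact ⟨⟨i', χ⟩, Sigma.ext rfl (heq_of_eq hχ.symm)⟩
  obtain ⟨σ', rfl⟩ := hfactor
  exact Submodule.mem_iSup_of_mem t ⟨Finsupp.single σ' _, Finsupp.mapDomain_single⟩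

theorem IsFinProjMod.mem_iSup_range_map_projMor {M : OrbMod G F R} (hM : IsFinProjMod R M)
    (hWK : W.grp ≤ K.grp) (hWJ : ∀ t, W.grp ≤ (J t).grp) (hKL : ∀ t, K.grp ≤ (L t).grp)
    (hL : ∀ t, (L t).grp ≤ K.grp ⊔ (J t).grp) {β : M.obj (op K)}
    (hβ : M.map (projMor W K hWK).op β ∈
      ⨆ t, LinearMap.range (M.map (projMor W (J t) (hWJ t)).op).hom) :
    β ∈ ⨆ t, LinearMap.range (M.map (projMor K (L t) (hKL t)).op).hom := by
  obtain ⟨P, i, r, ⟨k, b, ⟨e⟩⟩, hir⟩ := hM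
  have hret : (i ≫ e.hom) ≫ (e.inv ≫ r) = 𝟙 M := by simp [hir]
  have hβfree : (i ≫ e.hom).app _ β ∈ ⨆ t, LinearMap.range (Finsupp.lmapDomain R R
      (precompBasis b (projMor K (L t) (hKL t)))) := by
    refine mem_iSup_range_lmapDomain_precompBasis b hWK hWJ hKL hL ?_
    have := map_iSup_range_map_le (i ≫ e.hom) _ ⟨_, hβ, rfl⟩
    rwa [NatTrans.naturality_apply] at this
  have hβ' : β = (e.inv ≫ r).app _ ((i ≫ e.hom).app _ β) := by
    simpa using (congr_arg (fun η => η.app (op K) β) hret).symm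
  rw [hβ']
  exact map_iSup_range_map_le (e.inv ≫ r) _ ⟨_, hβfree, rfl⟩

end PushoutProperty

section Evaluation

variable (C : OrbCx G F R)

abbrev dAt (W : OrbitObj G F) (i j : ℕ) : (C.X i).obj (op W) →ₗ[R] (C.X j).obj (op W) :=
  ((C.d i j).app (op W)).hom

abbrev res {W X : OrbitObj G F} (f : W ⟶ X) (i : ℕ) :
    (C.X i).obj (op X) →ₗ[R] (C.X i).obj (op W) :=
  ((C.X i).map f.op).hom

variable {C} {n : Subgroup G → ℤ} {W X : OrbitObj G F}

lemma dAt_res (f : W ⟶ X) (i j : ℕ) (x : (C.X i).obj (op X)) :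
    dAt C W i j (res C f i x) = res C f j (dAt C X i j x) :=
  NatTrans.naturality_apply (C.d i j) f.op x

lemma res_comp {Y : OrbitObj G F} (f : W ⟶ X) (g : X ⟶ Y) (i : ℕ) (x : (C.X i).obj (op Y)) :
    res C (f ≫ g) i x = res C f i (res C g i x) := by
  simp [res]

lemma dAt_dAt (i j k : ℕ) (x : (C.X i).obj (op W)) : dAt C W j k (dAt C W i j x) = 0 :=
  congr($((evalCx C W).d_comp_d i j k) x)

lemma dAt_zero : dAt C W 0 0 = 0 := by
  rw [dAt, C.shape 0 0 (by simp)]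
  rfl

lemma range_res_eq_bot (f : W ⟶ X) {i : ℕ} (h : IsZero ((C.X i).obj (op X))) :
    LinearMap.range (res C f i) = ⊥ := by
  have := ModuleCat.isZero_iff_subsingleton.1 h
  rw [LinearMap.range_eq_bot, LinearMap.ext_iff]
  intro x
  rw [Subsingleton.elim x 0, map_zero, LinearMap.zero_apply]

lemma CondII.exists_cycle (h2 : CondII C n) (f : W ⟶ X) (hn : n W.grp = n X.grp) {i : ℕ}
    {z : (C.X i).obj (op W)} (hz : dAt C W i (i - 1) z = 0) :
    ∃ u : (C.X i).obj (op X), dAt C X i (i - 1) u = 0 ∧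
      ∃ w : (C.X (i + 1)).obj (op W), z = res C f i u + dAt C W (i + 1) i w :=
  have := h2 W X f hn i
  ChainComplex.moduleCat_exists_cycle_of_isIso_homologyMap (evalMap C f) i z hz

lemma CondII.exists_boundary (h2 : CondII C n) (f : W ⟶ X) (hn : n W.grp = n X.grp) {i : ℕ}
    {u : (C.X i).obj (op X)} (hu : dAt C X i (i - 1) u = 0) {w : (C.X (i + 1)).obj (op W)}
    (hw : res C f i u = dAt C W (i + 1) i w) :
    ∃ v : (C.X (i + 1)).obj (op X), dAt C X (i + 1) i v = u :=
  have := h2 W X f hn i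
  ChainComplex.moduleCat_exists_boundary_of_isIso_homologyMap (evalMap C f) i u hu w hw

end Evaluation

section EqualDimension

variable (n : Subgroup G → ℤ) (A : OrbitObj G F)

def eqDimAbove : Set (Subgroup G) :=
  {K | K ∈ F ∧ A.grp ≤ K ∧ ¬ Subconj G K A.grp ∧ n K = n A.grp}

abbrev EqDimOver (W : OrbitObj G F) : Type :=
  {K : OrbitObj G F // K.grp ∈ eqDimAbove n A ∧ W.grp ≤ K.grp}

variable {n A}

lemma sup_mem_eqDimAbove (h3 : CondIII G F n) (hA : 0 ≤ n A.grp) {K L : Subgroup G}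
    (hK : K ∈ eqDimAbove n A) (hL : L ∈ eqDimAbove n A) : K ⊔ L ∈ eqDimAbove n A := by
  obtain ⟨hKF, hAK, hKA, hnK⟩ := hK
  obtain ⟨hLF, hAL, -, hnL⟩ := hL
  obtain ⟨hF, hn⟩ := h3 A.grp K L A.mem hKF hLF hAK hAL hnK.symm hnL.symm (by omega)
  exact ⟨hF, hAK.trans le_sup_left, fun h => hKA ((subconj_of_le le_sup_left).trans h), hn⟩

namespace EqDimOver

variable {W : OrbitObj G F} (o : EqDimOver n A W)

def proj : W ⟶ o.1 :=
  projMor W o.1 o.2.2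

lemma n_eq : n o.1.grp = n A.grp :=
  o.2.1.2.2.2

lemma subconjLT : SubconjLT G A.grp o.1.grp :=
  ⟨subconj_of_le o.2.1.2.1, o.2.1.2.2.1⟩

def sup (h3 : CondIII G F n) (hA : 0 ≤ n A.grp) (o' : EqDimOver n A W) : EqDimOver n A o.1 :=
  ⟨⟨o.1.grp ⊔ o'.1.grp, (sup_mem_eqDimAbove h3 hA o.2.1 o'.2.1).1⟩,
    sup_mem_eqDimAbove h3 hA o.2.1 o'.2.1, le_sup_left⟩

variable {o}

lemma proj_comp_projMor {J : EqDimOver n A W} (hoJ : o.1.grp ≤ J.1.grp) :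
    o.proj ≫ projMor o.1 J.1 hoJ = J.proj :=
  (projMor_comp _ _ _ _ _).symm

lemma exists_upper_bound (h3 : CondIII G F n) (hA : 0 ≤ n A.grp)
    {s : Finset (EqDimOver n A W)} (hs : s.Nonempty) :
    ∃ J : EqDimOver n A W, ∀ o ∈ s, o.1.grp ≤ J.1.grp := by
  have hmem : s.sup' hs (fun o => o.1.grp) ∈ eqDimAbove n A :=
    Finset.sup'_induction hs _ (fun _ hK _ hL => sup_mem_eqDimAbove h3 hA hK hL)
      fun o _ => o.2.1
  obtain ⟨o, ho⟩ := hs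
  exact ⟨⟨⟨_, hmem.1⟩, hmem, o.2.2.trans (Finset.le_sup' (fun o => o.1.grp) ho)⟩,
    fun o' ho' => Finset.le_sup' (fun o => o.1.grp) ho'⟩

end EqDimOver

end EqualDimension

section ImageSums

variable (C : OrbCx G F R) {n : Subgroup G → ℤ} {A W : OrbitObj G F}

def imageSum (s : Finset (EqDimOver n A W)) (i : ℕ) : Submodule R ((C.X i).obj (op W)) :=
  ⨆ o ∈ s, LinearMap.range (res C o.proj i)

-- For `i = 0` we have `i - 1 = 0` and `∂ = 0`, so all of `C_0(K)` counts as cycles.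
def cycleImageSum (s : Finset (EqDimOver n A W)) (i : ℕ) : Submodule R ((C.X i).obj (op W)) :=
  ⨆ o ∈ s, (LinearMap.ker (dAt C o.1 i (i - 1))).map (res C o.proj i)

variable {C}

lemma range_res_le_imageSum {s : Finset (EqDimOver n A W)} {o : EqDimOver n A W} (ho : o ∈ s)
    (i : ℕ) : LinearMap.range (res C o.proj i) ≤ imageSum C s i :=
  fun _ hx => Submodule.mem_iSup_of_mem o (Submodule.mem_iSup_of_mem ho hx)

lemma range_res_le_range_res {o J : EqDimOver n A W} (hoJ : o.1.grp ≤ J.1.grp) (i : ℕ) :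
    LinearMap.range (res C J.proj i) ≤ LinearMap.range (res C o.proj i) := by
  simpa only [EqDimOver.proj_comp_projMor hoJ] using
    range_le_of_factor C o.proj (projMor o.1 J.1 hoJ) i

lemma map_dAt_imageSum_le (s : Finset (EqDimOver n A W)) (i j : ℕ) :
    (imageSum C s i).map (dAt C W i j) ≤ imageSum C s j := by
  simp only [imageSum, Submodule.map_iSup]
  exact iSup₂_mono fun o _ => mapRange_le C o.proj i j

lemma map_res_iSup_range_sup_le (h3 : CondIII G F n) (hA : 0 ≤ n A.grp)
    (o : EqDimOver n A W) (s : Finset (EqDimOver n A W)) (i : ℕ) :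
    (⨆ o' ∈ s, LinearMap.range (res C (o.sup h3 hA o').proj i)).map (res C o.proj i) ≤
      imageSum C s i := by
  simp only [Submodule.map_iSup, ← LinearMap.range_comp]
  refine iSup₂_mono fun o' _ => ?_
  have hfactor : o.proj ≫ (o.sup h3 hA o').proj =
      o'.proj ≫ projMor o'.1 (o.sup h3 hA o').1 le_sup_right :=
    (projMor_comp _ _ _ _ _).symm.trans (projMor_comp _ _ _ _ _)
  have := range_le_of_factor C o'.proj (projMor o'.1 (o.sup h3 hA o').1 le_sup_right) i
  rwa [← hfactor, op_comp, Functor.map_comp] at this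

lemma res_add_mem_sup_imageSum (hfin : IsFiniteProjCx R C) (h3 : CondIII G F n)
    (hA : 0 ≤ n A.grp) {o : EqDimOver n A W} {s : Finset (EqDimOver n A W)} {i : ℕ}
    (hlift : ∀ s' : Finset (EqDimOver n A o.1),
      (imageSum C s' (i - 1)).comap (dAt C o.1 i (i - 1)) ≤
        LinearMap.ker (dAt C o.1 i (i - 1)) ⊔ imageSum C s' i)
    {h : (C.X i).obj (op o.1)} {b : (C.X i).obj (op W)} (hb : b ∈ imageSum C s i)
    (hcyc : dAt C W i (i - 1) (res C o.proj i h + b) = 0) :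
    res C o.proj i h + b ∈
      (LinearMap.ker (dAt C o.1 i (i - 1))).map (res C o.proj i) ⊔ imageSum C s i := by
  classical
  have hdh : res C o.proj (i - 1) (dAt C o.1 i (i - 1) h) ∈ imageSum C s (i - 1) := by
    rw [← dAt_res, eq_neg_of_add_eq_zero_left ((map_add _ _ _).symm.trans hcyc)]
    exact neg_mem (map_dAt_imageSum_le s i (i - 1) ⟨b, hb, rfl⟩)
  have hdh' : dAt C o.1 i (i - 1) h ∈ imageSum C (s.image (o.sup h3 hA)) (i - 1) := by
    rw [imageSum, Finset.iSup_finset_image, iSup_subtype']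
    rw [imageSum, iSup_subtype'] at hdh
    exact (hfin.2 (i - 1)).mem_iSup_range_map_projMor o.2.2 (fun t => t.1.2.2)
      (fun _ => le_sup_left) (fun _ => le_rfl) hdh
  obtain ⟨ζ, hζ, c, hc, rfl⟩ := Submodule.mem_sup.1 (hlift _ hdh')
  rw [imageSum, Finset.iSup_finset_image] at hc
  rw [map_add, add_assoc]
  exact Submodule.add_mem_sup ⟨ζ, hζ, rfl⟩
    (add_mem (map_res_iSup_range_sup_le h3 hA o s i ⟨c, hc, rfl⟩) hb)

lemma ker_inf_imageSum_le_cycleImageSum (hfin : IsFiniteProjCx R C) (h3 : CondIII G F n)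
    (hA : 0 ≤ n A.grp) {i : ℕ}
    (hlift : ∀ (o : EqDimOver n A W) (s' : Finset (EqDimOver n A o.1)),
      (imageSum C s' (i - 1)).comap (dAt C o.1 i (i - 1)) ≤
        LinearMap.ker (dAt C o.1 i (i - 1)) ⊔ imageSum C s' i)
    (s : Finset (EqDimOver n A W)) :
    LinearMap.ker (dAt C W i (i - 1)) ⊓ imageSum C s i ≤ cycleImageSum C s i := by
  classical
  induction s using Finset.induction_on with
  | empty => simp [imageSum]
  | insert o s _ ih =>
    rintro x ⟨hx, hxs⟩
    rw [imageSum, Finset.iSup_insert] at hxs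
    obtain ⟨_, ⟨h, rfl⟩, b, hb, rfl⟩ := Submodule.mem_sup.1 hxs
    obtain ⟨_, ⟨ζ, hζ, rfl⟩, ξ, hξ, hsum⟩ :=
      Submodule.mem_sup.1 (res_add_mem_sup_imageSum hfin h3 hA (hlift o) hb hx)
    have hξcyc : dAt C W i (i - 1) ξ = 0 := by
      rw [← add_sub_cancel_left (res C o.proj i ζ) ξ, hsum, map_sub, hx, dAt_res,
        LinearMap.mem_ker.1 hζ, map_zero, sub_zero]
    rw [← hsum, cycleImageSum, Finset.iSup_insert]
    exact Submodule.add_mem_sup ⟨ζ, hζ, rfl⟩ (ih ⟨hξcyc, hξ⟩)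

lemma map_ker_res_le (h2 : CondII C n) {o J : EqDimOver n A W} (hoJ : o.1.grp ≤ J.1.grp)
    (i : ℕ) :
    (LinearMap.ker (dAt C o.1 i (i - 1))).map (res C o.proj i) ≤
      (LinearMap.ker (dAt C J.1 i (i - 1))).map (res C J.proj i) ⊔
        (LinearMap.range (res C o.proj (i + 1))).map (dAt C W (i + 1) i) := by
  rintro _ ⟨ζ, hζ, rfl⟩
  obtain ⟨u, hu, w, rfl⟩ :=
    h2.exists_cycle (projMor o.1 J.1 hoJ) (o.n_eq.trans J.n_eq.symm) hζ
  refine Submodule.mem_sup.2 ⟨res C J.proj i u, ⟨u, hu, rfl⟩,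
    dAt C W (i + 1) i (res C o.proj (i + 1) w), ⟨_, ⟨w, rfl⟩, rfl⟩, ?_⟩
  rw [map_add, dAt_res, ← res_comp, EqDimOver.proj_comp_projMor]

lemma cycleImageSum_inf_range_le (h2 : CondII C n) (h3 : CondIII G F n) (hA : 0 ≤ n A.grp)
    (hW : n W.grp = n A.grp) (s : Finset (EqDimOver n A W)) (i : ℕ) :
    cycleImageSum C s i ⊓ LinearMap.range (dAt C W (i + 1) i) ≤
      (imageSum C s (i + 1)).map (dAt C W (i + 1) i) := by
  rcases s.eq_empty_or_nonempty with rfl | hs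
  · simp [cycleImageSum]
  obtain ⟨J, hJ⟩ := EqDimOver.exists_upper_bound h3 hA hs
  obtain ⟨o, ho⟩ := hs
  have hle : cycleImageSum C s i ≤ (LinearMap.ker (dAt C J.1 i (i - 1))).map (res C J.proj i) ⊔
      (imageSum C s (i + 1)).map (dAt C W (i + 1) i) :=
    iSup₂_le fun o' ho' => (map_ker_res_le h2 (hJ o' ho') i).trans
      (sup_le_sup_left (Submodule.map_mono (range_res_le_imageSum ho' (i + 1))) _)
  rintro _ ⟨hz, y, rfl⟩
  obtain ⟨_, ⟨u, hu, rfl⟩, _, ⟨c, hc, rfl⟩, hyuc⟩ := Submodule.mem_sup.1 (hle hz)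
  obtain ⟨v, hv⟩ := h2.exists_boundary J.proj (hW.trans J.n_eq.symm) hu
    (w := y - c) (by rw [map_sub, ← hyuc, add_sub_cancel_right])
  refine ⟨res C J.proj (i + 1) v + c, add_mem (range_res_le_imageSum ho (i + 1)
    (range_res_le_range_res (hJ o ho) (i + 1) ⟨v, rfl⟩)) hc, ?_⟩
  rw [map_add, dAt_res, hv, hyuc]

theorem comap_dAt_imageSum_le (hfin : IsFiniteProjCx R C) (h2 : CondII C n)
    (h3 : CondIII G F n) (hA : 0 ≤ n A.grp) (i : ℕ) {W : OrbitObj G F}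
    (hW : n W.grp = n A.grp) (s : Finset (EqDimOver n A W)) :
    (imageSum C s (i - 1)).comap (dAt C W i (i - 1)) ≤
      LinearMap.ker (dAt C W i (i - 1)) ⊔ imageSum C s i := by
  induction i generalizing W with
  | zero => exact fun y _ => Submodule.mem_sup_left (by simp [dAt_zero])
  | succ i ih =>
    intro y hy
    have hcyc : dAt C W (i + 1) i y ∈ cycleImageSum C s i :=
      ker_inf_imageSum_le_cycleImageSum hfin h3 hA (fun o s' => ih o.n_eq s') s
        ⟨dAt_dAt (i + 1) i (i - 1) y, hy⟩
    obtain ⟨ν, hν, hdν⟩ := cycleImageSum_inf_range_le h2 h3 hA hW s i ⟨hcyc, y, rfl⟩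
    rw [← sub_add_cancel y ν]
    exact Submodule.add_mem_sup (by simp [hdν]) hν

lemma imageSum_eq_bot (hvan : ∀ B : OrbitObj G F, SubconjLT G A.grp B.grp →
      ∀ j : ℕ, n B.grp < j → IsZero ((C.X j).obj (op B)))
    (s : Finset (EqDimOver n A W)) {j : ℕ} (hj : n A.grp < j) : imageSum C s j = ⊥ :=
  eq_bot_iff.2 (iSup₂_le fun o _ =>
    (range_res_eq_bot o.proj (hvan o.1 o.subconjLT j (o.n_eq ▸ hj))).le)

lemma range_res_le_iSup_range_proj (hF : IsClosedFamily G F) (hn : IsSuperClass G F n)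
    (h1 : CondI G n) {B : OrbitObj G F} (hB : SubconjLT G A.grp B.grp) (f : A ⟶ B) {i : ℕ}
    (hvan : n B.grp < n A.grp → IsZero ((C.X i).obj (op B))) :
    LinearMap.range (res C f i) ≤ ⨆ o : EqDimOver n A A, LinearMap.range (res C o.proj i) := by
  by_cases hnB : n B.grp = n A.grp
  · obtain ⟨K, a, hAK, φ, hK, rfl⟩ := exists_eq_projMor_comp hF f
    have hKA : ¬ Subconj G K.grp A.grp := fun h => hB.2 (Subconj.trans ⟨a, hK.ge⟩ h)
    let o : EqDimOver n A A := ⟨K, ⟨K.mem, hAK, hKA, by rw [hK, hn.1, hnB]⟩, hAK⟩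
    exact (range_le_of_factor C o.proj φ i).trans (le_iSup_of_le o le_rfl)
  · rw [range_res_eq_bot f (hvan (lt_of_le_of_ne (h1 _ _ hB.1) hnB))]
    exact bot_le

end ImageSums

theorem stmt11_general
    (hF : IsClosedFamily G F) (C : OrbCx G F R)
    (eps : C.X 0 ⟶ constR G F R) (heps : C.d 1 0 ≫ eps = 0)
    (n : Subgroup G → ℤ) (hn : IsSuperClass G F n)
    (hfin : IsFiniteProjCx R C) (hsph : IsHomologySphere C eps heps n)
    (h1 : CondI G n) (h2 : CondII C n) (h3 : CondIII G F n)
    (A : OrbitObj G F)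
    (htight : ∀ B : OrbitObj G F, SubconjLT G A.grp B.grp → TightAt C B)
    (m : ℕ) (hm : (m : ℤ) = n A.grp) :
    IsZero ((subQuotCx (evalCx C A)
        (rangeN C A
          (fun k : (Σ B : {B : OrbitObj G F // SubconjLT G A.grp B.grp}, (A ⟶ B.1)) => k.1.1)
          (fun k => k.2))
        (rangeN_compat C A
          (fun k : (Σ B : {B : OrbitObj G F // SubconjLT G A.grp B.grp}, (A ⟶ B.1)) => k.1.1)
          (fun k => k.2))).homology (m + 1)) := by
  have hA : 0 ≤ n A.grp := hm ▸ m.cast_nonneg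
  have hvan : ∀ B : OrbitObj G F, SubconjLT G A.grp B.grp →
      ∀ j : ℕ, n B.grp < j → IsZero ((C.X j).obj (op B)) :=
    fun B hB _ hj => isZero_of_tightAt hfin.1 (hsph B) (htight B hB) hj
  have hexact := isZero_homology_of_sphereLike _ _ _ (hsph A) (m + 1) (by omega)
  rw [ChainComplex.moduleCat_isZero_homology_iff] at hexact ⊢
  intro q hq
  obtain ⟨x, rfl⟩ := Submodule.Quotient.mk_surjective _ q
  have hle : rangeN C A
      (fun k : (Σ B : {B : OrbitObj G F // SubconjLT G A.grp B.grp}, (A ⟶ B.1)) => k.1.1)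
      (fun k => k.2) m ≤ ⨆ o : EqDimOver n A A, LinearMap.range (res C o.proj m) :=
    iSup_le fun k => range_res_le_iSup_range_proj hF hn h1 k.1.2 k.2
      fun _ => hvan _ k.1.2 m (by omega)
  obtain ⟨s, hs⟩ := Submodule.exists_finset_of_mem_iSup
    (fun o : EqDimOver n A A => LinearMap.range (res C o.proj m))
    (hle ((Submodule.Quotient.mk_eq_zero _).1 hq))
  have hcyc := comap_dAt_imageSum_le hfin h2 h3 hA (m + 1) rfl s hs
  rw [imageSum_eq_bot hvan s (by omega), sup_bot_eq] at hcyc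
  obtain ⟨y, hy⟩ := hexact x hcyc
  exact ⟨Submodule.Quotient.mk y, congrArg Submodule.Quotient.mk hy⟩

/-- vanishing of `H_{n+1}(S_H C)` for the splitting quotient. -/
theorem stmt11 [IsDomain R] [IsPrincipalIdealRing R]
    (hF : IsClosedFamily G F) (C : OrbCx G F R)
    (eps : C.X 0 ⟶ constR G F R) (heps : C.d 1 0 ≫ eps = 0)
    (n : Subgroup G → ℤ) (hn : IsSuperClass G F n)
    (hfin : IsFiniteProjCx R C) (hsph : IsHomologySphere C eps heps n)
    (h1 : CondI G n) (h2 : CondII C n) (h3 : CondIII G F n)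
    (A : OrbitObj G F)
    (htight : ∀ B : OrbitObj G F, SubconjLT G A.grp B.grp → TightAt C B)
    (m : ℕ) (hm : (m : ℤ) = n A.grp) :
    IsZero ((subQuotCx (evalCx C A)
        (rangeN C A
          (fun k : (Σ B : {B : OrbitObj G F // SubconjLT G A.grp B.grp}, (A ⟶ B.1)) => k.1.1)
          (fun k => k.2))
        (rangeN_compat C A
          (fun k : (Σ B : {B : OrbitObj G F // SubconjLT G A.grp B.grp}, (A ⟶ B.1)) => k.1.1)
          (fun k => k.2))).homology (m + 1)) :=
  stmt11_general hF C eps heps n hn hfin hsph h1 h2 h3 A htight m hm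

end OrbitPaper
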